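/- Let m ≥ 1 and ℓ ≥ 1, and let μ and ν be centered Borel probability measures on ℝ^q, each with 2mℓ finite homogeneous moments. Let U₁ and U₂ be generalized U-statistics of homogeneous degrees d₁ and d₂ respectively, let m_β be a monomial on ℝ^q of homogeneous degree k ≥ 1, and suppose d₁ + d₂ + k ≤ ℓ. Then there is a constant C = C(μ, ν, q, m, ℓ) > 0 such that for all N ≥ 1 and all 1 ≤ j ≤ N, if x₀ ∈ (ℝ^q)^{j−1}, x_j ∈ ℝ^q and x_t ∈ (ℝ^q)^{N−j} are independent with x₀ ∼ μ^{⊗(j−1)}, x_t ∼ ν^{⊗(N−j)}, and x_j distributed according to either μ or ν, then E[ |U₁(x₀) · m_β(x_j) · U₂(x_t)|^{2m} ] ≤ C · N^{(d₁ + d₂)m}. -/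

import Mathlib

/-!
Expand `U^{2m}` as a sum over `2m`-tuples `φ` of index maps. Under the product measure the
expectation of each term factorises over the sites `t`, the factor at `t` being a mixed moment
of the blocks that `φ` places at `t`. If a site carries a single block of homogeneous degree
one, that block is a centred coordinate and the term vanishes. Otherwise every occupied site
carries total degree at least two, and as the total degree is `2m·d`, at most `m·d` sites are
occupied: there are `O(N^{m d})` such tuples, each contributing at most a fixed moment
constant. In the mixed statement the three independent factors separate by Fubini, and the
monomial in the middle only contributes a constant.
-/


open MeasureTheory Finset
open scoped Classical

/-- The generalized U-statistic associated to a list of blocks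
`B = [(S₁, α₁), …, (S_r, α_r)]`, where `S_k ⊆ {1,…,q}` and `α_k : {1,…,q} → ℕ`:
`U_α(x) = Σ_{1 ≤ ℓ₁ < ⋯ < ℓ_r ≤ N} ∏_{k=1}^r ∏_{c ∈ S_k} (x_{ℓ_k}^{(c)})^{α_k(c)}`. -/
noncomputable def Ustat {q : ℕ} (B : List (Finset (Fin q) × (Fin q → ℕ))) {N : ℕ}
    (x : Fin N → Fin q → ℝ) : ℝ :=
  ∑ ℓ ∈ Finset.univ.filter (fun ℓ : Fin B.length → Fin N => StrictMono ℓ),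
    ∏ k : Fin B.length, ∏ c ∈ (B.get k).1, x (ℓ k) c ^ (B.get k).2 c

/-- A valid block structure for a generalized U-statistic: `r ≥ 1`, each `S_k` is
nonempty, and each exponent `α_k(c)`, `c ∈ S_k`, is a positive integer. -/
def ValidBlocks {q : ℕ} (B : List (Finset (Fin q) × (Fin q → ℕ))) : Prop :=
  B ≠ [] ∧ ∀ p ∈ B, p.1.Nonempty ∧ ∀ c ∈ p.1, 0 < p.2 c

/-- The homogeneous degree of a monomial with exponent vector `β`, with respect to the
weight function `w` assigning a homogeneous degree to each coordinate. -/
def homDeg {q : ℕ} (w : Fin q → ℕ) (β : Fin q → ℕ) : ℕ := ∑ c, w c * β c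

/-- The homogeneous degree `Σ_{k=1}^r Σ_{c ∈ S_k} w(c)·α_k(c)` of a generalized
U-statistic with blocks `B`. -/
def ustatHomDeg {q : ℕ} (w : Fin q → ℕ) (B : List (Finset (Fin q) × (Fin q → ℕ))) : ℕ :=
  (B.map fun p => ∑ c ∈ p.1, w c * p.2 c).sum

/-- `μ` has `d` finite homogeneous moments: `∫ ∏_c |x^{(c)}|^{β_c} dμ < ∞` for every
monomial of homogeneous degree at most `d`. -/
def HasFiniteHomMoments {q : ℕ} (w : Fin q → ℕ) (μ : Measure (Fin q → ℝ)) (d : ℕ) : Prop :=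
  ∀ β : Fin q → ℕ, homDeg w β ≤ d → Integrable (fun x : Fin q → ℝ => ∏ c, |x c| ^ β c) μ

/-- `μ` is centered: every degree-1 coordinate has mean zero. -/
def IsCenteredMeasure {q : ℕ} (w : Fin q → ℕ) (μ : Measure (Fin q → ℝ)) : Prop :=
  ∀ c, w c = 1 → ∫ x, x c ∂μ = 0

lemma exists_comp_eq_of_card_image_le {α γ : Type*} [Fintype α] [Nonempty α] [DecidableEq γ]
    {J : ℕ} (ψ : α → γ) (hψ : #(univ.image ψ) ≤ J) :
    ∃ f : α → Fin J, ∃ g : Fin J → γ, g ∘ f = ψ := by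
  set s := univ.image ψ
  have hmem : ∀ a, ψ a ∈ s := fun a => mem_image_of_mem ψ (mem_univ a)
  refine ⟨fun a => Fin.castLE hψ (s.equivFin ⟨ψ a, hmem a⟩),
    fun i => if h : (i : ℕ) < #s then s.equivFin.symm ⟨i, h⟩ else ψ (Classical.arbitrary α), ?_⟩
  funext a
  simp

lemma card_le_of_card_image_le {α γ : Type*} [Fintype α] [Nonempty α] [Fintype γ]
    [DecidableEq γ] {J : ℕ} (S : Finset (α → γ)) (hS : ∀ ψ ∈ S, #(univ.image ψ) ≤ J) :
    #S ≤ J ^ Fintype.card α * Fintype.card γ ^ J := by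
  calc #S ≤ #(univ.image fun fg : (α → Fin J) × (Fin J → γ) => fg.2 ∘ fg.1) :=
        card_le_card fun ψ hψ => by
          obtain ⟨f, g, rfl⟩ := exists_comp_eq_of_card_image_le ψ (hS ψ hψ)
          exact mem_image_of_mem _ (mem_univ (f, g))
    _ ≤ Fintype.card ((α → Fin J) × (Fin J → γ)) := card_image_le
    _ = J ^ Fintype.card α * Fintype.card γ ^ J := by simp

lemma two_mul_card_image_le_sum {κ τ : Type*} [Fintype κ] [DecidableEq τ] (ψ : κ → τ)
    (deg : κ → ℕ) (h : ∀ t ∈ univ.image ψ, 2 ≤ ∑ a with ψ a = t, deg a) :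
    2 * #(univ.image ψ) ≤ ∑ a, deg a :=
  calc 2 * #(univ.image ψ) = ∑ t ∈ univ.image ψ, 2 := by rw [sum_const, smul_eq_mul, mul_comm]
    _ ≤ ∑ t ∈ univ.image ψ, ∑ a with ψ a = t, deg a := sum_le_sum h
    _ = ∑ a, deg a := sum_fiberwise_of_maps_to (fun a _ => mem_image_of_mem ψ (mem_univ a)) deg

lemma pow_sum_prod_eq_sum_prod_fiber {R ι τ Ω : Type*} [CommSemiring R] [Fintype ι] [Fintype τ]
    [DecidableEq τ] (S : Finset (ι → τ)) (g : ι → Ω → R) (x : τ → Ω) (p : ℕ) :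
    (∑ ℓ ∈ S, ∏ k, g k (x (ℓ k))) ^ p =
      ∑ φ ∈ Fintype.piFinset fun _ : Fin p => S,
        ∏ t, ∏ a with Function.uncurry φ a = t, g a.2 (x t) := by
  rw [← Fin.prod_const, prod_univ_sum]
  refine sum_congr rfl fun φ _ => ?_
  rw [← Fintype.prod_prod_type', ← prod_fiberwise univ (Function.uncurry φ)]
  refine prod_congr rfl fun t _ => prod_congr rfl fun a ha => ?_
  obtain rfl := (mem_filter.1 ha).2
  rfl

section FiberIntegrals

variable {Ω κ τ : Type*} [MeasurableSpace Ω] {μ : Measure Ω} [Fintype κ] [Fintype τ]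
  [DecidableEq τ] {f : κ → Ω → ℝ}

lemma two_le_sum_fiber_of_prod_integral_ne_zero {deg : κ → ℕ} (hdeg : ∀ a, 1 ≤ deg a)
    (hcent : ∀ a, deg a = 1 → ∫ y, f a y ∂μ = 0) (ψ : κ → τ)
    (hne : ∏ t, ∫ y, ∏ a with ψ a = t, f a y ∂μ ≠ 0) :
    ∀ t ∈ univ.image ψ, 2 ≤ ∑ a with ψ a = t, deg a := by
  intro t ht
  by_contra! hlt
  have hnonempty : (univ.filter (ψ · = t)).Nonempty := by
    obtain ⟨a, -, rfl⟩ := mem_image.1 ht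
    exact ⟨a, by simp⟩
  have hcard : #(univ.filter (ψ · = t)) ≤ 1 := by
    calc #(univ.filter (ψ · = t)) = ∑ a with ψ a = t, 1 := card_eq_sum_ones _
      _ ≤ ∑ a with ψ a = t, deg a := sum_le_sum fun a _ => hdeg a
      _ ≤ 1 := by omega
  obtain ⟨a, ha⟩ := card_eq_one.1 (le_antisymm hcard hnonempty.card_pos)
  rw [ha, sum_singleton] at hlt
  refine hne (prod_eq_zero (mem_univ t) ?_)
  rw [ha, integral_congr_ae (Filter.Eventually.of_forall fun y => prod_singleton _ _)]
  exact hcent a (by have := hdeg a; omega)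

lemma abs_prod_integral_fiber_le [IsProbabilityMeasure μ] {M : ℝ} (hM : 1 ≤ M)
    (hbound : ∀ s : Finset κ, |∫ y, ∏ a ∈ s, f a y ∂μ| ≤ M) (ψ : κ → τ) :
    |∏ t, ∫ y, ∏ a with ψ a = t, f a y ∂μ| ≤ M ^ Fintype.card κ := by
  have hempty : ∀ t ∉ univ.image ψ, ∫ y, ∏ a with ψ a = t, f a y ∂μ = 1 := by
    intro t ht
    have : univ.filter (ψ · = t) = ∅ :=
      filter_eq_empty_iff.2 fun a _ h => ht (h ▸ mem_image_of_mem ψ (mem_univ a))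
    simp [this]
  calc |∏ t, ∫ y, ∏ a with ψ a = t, f a y ∂μ|
      = ∏ t ∈ univ.image ψ, |∫ y, ∏ a with ψ a = t, f a y ∂μ| := by
        rw [abs_prod]
        exact (prod_subset (subset_univ _) fun t _ ht => by rw [hempty t ht, abs_one]).symm
    _ ≤ ∏ _t ∈ univ.image ψ, M := prod_le_prod (fun _ _ => abs_nonneg _) fun _ _ => hbound _
    _ = M ^ #(univ.image ψ) := prod_const M
    _ ≤ M ^ Fintype.card κ := pow_le_pow_right₀ hM (card_image_le.trans_eq card_univ)

end FiberIntegrals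

theorem integral_pow_sum_prod_le {Ω ι τ : Type*} [MeasurableSpace Ω] (μ : Measure Ω)
    [IsProbabilityMeasure μ] [Fintype ι] [Nonempty ι] [Fintype τ] [DecidableEq τ]
    (g : ι → Ω → ℝ) (deg : ι → ℕ) (hdeg : ∀ k, 1 ≤ deg k)
    (hcent : ∀ k, deg k = 1 → ∫ y, g k y ∂μ = 0) {m : ℕ} (hm : 1 ≤ m) {M : ℝ} (hM : 1 ≤ M)
    (hint : ∀ s : Finset (Fin (2 * m) × ι), Integrable (fun y => ∏ a ∈ s, g a.2 y) μ)
    (hbound : ∀ s : Finset (Fin (2 * m) × ι), |∫ y, ∏ a ∈ s, g a.2 y ∂μ| ≤ M)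
    (S : Finset (ι → τ)) :
    ∫ x, (∑ ℓ ∈ S, ∏ k, g k (x (ℓ k))) ^ (2 * m) ∂Measure.pi (fun _ : τ => μ) ≤
      ((m * ∑ k, deg k) ^ (2 * m * Fintype.card ι) : ℕ) * M ^ (2 * m * Fintype.card ι) *
        (Fintype.card τ : ℝ) ^ (m * ∑ k, deg k) := by
  set D := ∑ k, deg k
  set r := Fintype.card ι
  set P := Fintype.piFinset fun _ : Fin (2 * m) => S
  set E : (Fin (2 * m) → ι → τ) → ℝ :=
    fun φ => ∏ t, ∫ y, ∏ a with Function.uncurry φ a = t, g a.2 y ∂μ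
  set sparse : Finset (Fin (2 * m) → ι → τ) :=
    P.filter fun φ => #(univ.image (Function.uncurry φ)) ≤ m * D
  have hexpand : ∫ x, (∑ ℓ ∈ S, ∏ k, g k (x (ℓ k))) ^ (2 * m) ∂Measure.pi (fun _ : τ => μ) =
      ∑ φ ∈ P, E φ := by
    simp_rw [pow_sum_prod_eq_sum_prod_fiber]
    rw [integral_finsetSum _ fun φ _ => Integrable.fintype_prod fun t => hint _]
    exact sum_congr rfl fun φ _ =>
      integral_fintype_prod_eq_prod fun t y => ∏ a with Function.uncurry φ a = t, g a.2 y
  have hE : ∀ φ, E φ ≤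
      if #(univ.image (Function.uncurry φ)) ≤ m * D then M ^ (2 * m * r) else 0 := by
    intro φ
    by_cases h0 : E φ = 0
    · rw [h0]; split_ifs <;> positivity
    have hweight := two_mul_card_image_le_sum _ (fun a : Fin (2 * m) × ι => deg a.2)
      (two_le_sum_fiber_of_prod_integral_ne_zero (fun a => hdeg a.2) (fun a => hcent a.2) _ h0)
    simp only [Fintype.sum_prod_type, sum_const, card_univ, Fintype.card_fin, smul_eq_mul]
      at hweight
    rw [if_pos (Nat.le_of_mul_le_mul_left (hweight.trans_eq (mul_assoc _ _ _)) two_pos)]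
    calc E φ ≤ |E φ| := le_abs_self _
      _ ≤ M ^ Fintype.card (Fin (2 * m) × ι) := abs_prod_integral_fiber_le hM hbound _
      _ = M ^ (2 * m * r) := by rw [Fintype.card_prod, Fintype.card_fin]
  have hcount : #sparse ≤ (m * D) ^ (2 * m * r) * Fintype.card τ ^ (m * D) := by
    have : NeZero (2 * m) := ⟨by omega⟩
    have hcard := card_le_of_card_image_le (sparse.map ⟨_, Function.uncurry_injective⟩)
      fun ψ hψ => by
        obtain ⟨φ, hφ, rfl⟩ := mem_map.1 hψ
        exact (mem_filter.1 hφ).2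
    rwa [card_map, Fintype.card_prod, Fintype.card_fin] at hcard
  calc _ = ∑ φ ∈ P, E φ := hexpand
    _ ≤ ∑ φ ∈ P, if #(univ.image (Function.uncurry φ)) ≤ m * D then M ^ (2 * m * r) else 0 :=
        sum_le_sum fun φ _ => hE φ
    _ = #sparse * M ^ (2 * m * r) := by rw [← sum_filter, sum_const, nsmul_eq_mul]
    _ ≤ ((m * D) ^ (2 * m * r) * Fintype.card τ ^ (m * D) : ℕ) * M ^ (2 * m * r) := by
      gcongr
    _ = _ := by push_cast; ring

section Monomials

variable {q : ℕ} {w : Fin q → ℕ}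

def monomialFn (e : Fin q → ℕ) (y : Fin q → ℝ) : ℝ := ∏ c, y c ^ e c

lemma prod_monomialFn {ι : Type*} (s : Finset ι) (e : ι → Fin q → ℕ) (y : Fin q → ℝ) :
    ∏ i ∈ s, monomialFn (e i) y = monomialFn (∑ i ∈ s, e i) y := by
  simp only [monomialFn, Finset.sum_apply, ← prod_pow_eq_pow_sum]
  exact prod_comm

lemma monomialFn_pow (e : Fin q → ℕ) (y : Fin q → ℝ) (n : ℕ) :
    monomialFn e y ^ n = monomialFn (n • e) y := by
  simp only [monomialFn, ← prod_pow, Pi.smul_apply, smul_eq_mul, ← pow_mul, mul_comm]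

lemma measurable_monomialFn (e : Fin q → ℕ) : Measurable (monomialFn e) := by
  unfold monomialFn
  fun_prop

lemma homDeg_sum {ι : Type*} (s : Finset ι) (e : ι → Fin q → ℕ) :
    homDeg w (∑ i ∈ s, e i) = ∑ i ∈ s, homDeg w (e i) := by
  simp only [homDeg, Finset.sum_apply, mul_sum]
  exact sum_comm

lemma homDeg_nsmul (n : ℕ) (e : Fin q → ℕ) :
    homDeg w (n • e) = n * homDeg w e := by
  simp only [homDeg, mul_sum, Pi.smul_apply, smul_eq_mul]
  exact sum_congr rfl fun c _ => by ring

lemma finite_setOf_homDeg_le (hw : ∀ c, 1 ≤ w c) (D : ℕ) :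
    {e : Fin q → ℕ | homDeg w e ≤ D}.Finite := by
  refine (Set.Finite.pi' fun _ => Set.finite_Iic D).subset fun e he c => ?_
  calc e c ≤ w c * e c := Nat.le_mul_of_pos_left _ (hw c)
    _ ≤ homDeg w e := single_le_sum (f := fun c => w c * e c) (fun _ _ => Nat.zero_le _)
        (mem_univ c)
    _ ≤ D := he

lemma exists_abs_integral_monomialFn_le (hw : ∀ c, 1 ≤ w c) (μ : Measure (Fin q → ℝ))
    (D : ℕ) : ∃ M, 1 ≤ M ∧ ∀ e, homDeg w e ≤ D → |∫ y, monomialFn e y ∂μ| ≤ M := by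
  obtain ⟨M, hM⟩ := ((finite_setOf_homDeg_le hw D).image
    fun e => |∫ y, monomialFn e y ∂μ|).bddAbove
  exact ⟨max M 1, le_max_right _ _, fun e he => (hM ⟨e, he, rfl⟩).trans (le_max_left _ _)⟩

lemma HasFiniteHomMoments.mono {μ : Measure (Fin q → ℝ)} {D D' : ℕ}
    (h : HasFiniteHomMoments w μ D) (hD : D' ≤ D) : HasFiniteHomMoments w μ D' :=
  fun e he => h e (he.trans hD)

lemma HasFiniteHomMoments.integrable_monomialFn {μ : Measure (Fin q → ℝ)} {D : ℕ}
    (h : HasFiniteHomMoments w μ D) {e : Fin q → ℕ} (he : homDeg w e ≤ D) :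
    Integrable (monomialFn e) μ :=
  (h e he).mono' (measurable_monomialFn e).aestronglyMeasurable
    (Filter.Eventually.of_forall fun y => by simp [monomialFn])

lemma integral_monomialFn_pow_le {μ : Measure (Fin q → ℝ)} {M : ℝ} {D : ℕ}
    (hM : ∀ e, homDeg w e ≤ D → |∫ y, monomialFn e y ∂μ| ≤ M) {e : Fin q → ℕ} {n : ℕ}
    (he : n * homDeg w e ≤ D) : ∫ y, monomialFn e y ^ n ∂μ ≤ M := by
  simp only [monomialFn_pow]
  exact (le_abs_self _).trans (hM _ (by rwa [homDeg_nsmul]))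

/-- A monomial of homogeneous degree one is a single coordinate of weight one. -/
lemma IsCenteredMeasure.integral_monomialFn_eq_zero {μ : Measure (Fin q → ℝ)}
    (hμ : IsCenteredMeasure w μ) (hw : ∀ c, 1 ≤ w c) {e : Fin q → ℕ} (he : homDeg w e = 1) :
    ∫ y, monomialFn e y ∂μ = 0 := by
  obtain ⟨c, hc⟩ : ∃ c, e c ≠ 0 := by
    by_contra! h
    simp [homDeg, h] at he
  have hsplit := add_sum_erase univ (fun c => w c * e c) (mem_univ c)
  rw [← homDeg, he] at hsplit
  have hwc : w c * e c = 1 := by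
    have := Nat.mul_le_mul (hw c) (Nat.one_le_iff_ne_zero.2 hc)
    omega
  have hrest : ∀ c' ≠ c, e c' = 0 := fun c' hc' => by
    have h0 := sum_eq_zero_iff.1 (show ∑ c ∈ univ.erase c, w c * e c = 0 by omega) c'
      (mem_erase.2 ⟨hc', mem_univ c'⟩)
    simpa [Nat.one_le_iff_ne_zero.1 (hw c')] using h0
  have hcoord : monomialFn e = fun y => y c := funext fun y => by
    rw [monomialFn, prod_eq_single c (fun c' _ hc' => by rw [hrest c' hc', pow_zero])
      fun h => absurd (mem_univ c) h, (mul_eq_one.1 hwc).2, pow_one]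
  rw [hcoord]
  exact hμ c (mul_eq_one.1 hwc).1

end Monomials

section Blocks

variable {q : ℕ} {w : Fin q → ℕ} (B : List (Finset (Fin q) × (Fin q → ℕ)))

def blockExponent (k : Fin B.length) (c : Fin q) : ℕ :=
  if c ∈ (B.get k).1 then (B.get k).2 c else 0

lemma monomialFn_blockExponent (k : Fin B.length) (y : Fin q → ℝ) :
    monomialFn (blockExponent B k) y = ∏ c ∈ (B.get k).1, y c ^ (B.get k).2 c := by
  simp [monomialFn, blockExponent, apply_ite, prod_ite_mem]

lemma Ustat_eq_sum_prod_monomialFn {N : ℕ} (x : Fin N → Fin q → ℝ) :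
    Ustat B x = ∑ ℓ ∈ univ.filter (StrictMono : (Fin B.length → Fin N) → Prop),
      ∏ k, monomialFn (blockExponent B k) (x (ℓ k)) := by
  simp only [Ustat, monomialFn_blockExponent]

lemma sum_homDeg_blockExponent :
    ∑ k, homDeg w (blockExponent B k) = ustatHomDeg w B := by
  simp only [homDeg, blockExponent, ustatHomDeg, mul_ite, mul_zero, sum_ite_mem, univ_inter]
  exact Fin.sum_univ_fun_getElem B fun p => ∑ c ∈ p.1, w c * p.2 c

variable {B}

lemma ValidBlocks.one_le_homDeg_blockExponent (hB : ValidBlocks B) (hw : ∀ c, 1 ≤ w c)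
    (k : Fin B.length) : 1 ≤ homDeg w (blockExponent B k) := by
  obtain ⟨⟨c, hc⟩, hα⟩ := hB.2 (B.get k) (B.get_mem k)
  calc 1 ≤ w c * blockExponent B k c := by
        rw [blockExponent, if_pos hc]
        exact Nat.mul_le_mul (hw c) (hα c hc)
    _ ≤ homDeg w (blockExponent B k) :=
        single_le_sum (f := fun c => w c * blockExponent B k c) (fun _ _ => Nat.zero_le _)
          (mem_univ c)

theorem exists_integral_Ustat_pow_le (hw : ∀ c, 1 ≤ w c) (μ : Measure (Fin q → ℝ))
    [IsProbabilityMeasure μ] (hμ : IsCenteredMeasure w μ) {m : ℕ} (hm : 1 ≤ m)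
    (hmom : HasFiniteHomMoments w μ (2 * m * ustatHomDeg w B)) (hB : ValidBlocks B) :
    ∃ C, 0 < C ∧ ∀ n, ∫ x, Ustat B x ^ (2 * m) ∂Measure.pi (fun _ : Fin n => μ) ≤
      C * (n : ℝ) ^ (m * ustatHomDeg w B) := by
  set d := ustatHomDeg w B with hd_def
  have : Nonempty (Fin B.length) := ⟨⟨0, List.length_pos_iff.2 hB.1⟩⟩
  have hdeg := hB.one_le_homDeg_blockExponent hw
  have hd : 1 ≤ d := by
    rw [hd_def, ← sum_homDeg_blockExponent]
    exact (hdeg (Classical.arbitrary _)).trans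
      (single_le_sum (f := fun k => homDeg w (blockExponent B k)) (fun _ _ => Nat.zero_le _)
        (mem_univ _))
  have hfiber : ∀ s : Finset (Fin (2 * m) × Fin B.length),
      homDeg w (∑ a ∈ s, blockExponent B a.2) ≤ 2 * m * d := fun s => by
    rw [homDeg_sum, hd_def, ← sum_homDeg_blockExponent]
    calc ∑ a ∈ s, homDeg w (blockExponent B a.2)
        ≤ ∑ a : Fin (2 * m) × Fin B.length, homDeg w (blockExponent B a.2) :=
          sum_le_sum_of_subset (subset_univ s)
      _ = _ := by simp [Fintype.sum_prod_type]
  obtain ⟨M, hM, hMbound⟩ := exists_abs_integral_monomialFn_le hw μ (2 * m * d)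
  refine ⟨((m * d) ^ (2 * m * B.length) : ℕ) * M ^ (2 * m * B.length),
    mul_pos (by exact_mod_cast pow_pos (Nat.mul_pos hm hd) _) (by positivity), fun n => ?_⟩
  have key := integral_pow_sum_prod_le μ (fun k => monomialFn (blockExponent B k))
    (fun k => homDeg w (blockExponent B k)) hdeg
    (fun k hk => hμ.integral_monomialFn_eq_zero hw hk) hm hM
    (fun s => by simpa only [prod_monomialFn] using hmom.integrable_monomialFn (hfiber s))
    (fun s => by simpa only [prod_monomialFn] using hMbound _ (hfiber s))
    (univ.filter (StrictMono : (Fin B.length → Fin n) → Prop))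
  simp only [sum_homDeg_blockExponent, Fintype.card_fin] at key
  simpa only [Ustat_eq_sum_prod_monomialFn] using key

end Blocks

lemma integral_abs_mul_mul_pow_prod {X Y Z : Type*} [MeasurableSpace X] [MeasurableSpace Y]
    [MeasurableSpace Z] (μ : Measure X) (ν : Measure Y) (ρ : Measure Z) [SFinite μ] [SFinite ν]
    [SFinite ρ] (f : X → ℝ) (g : Y → ℝ) (h : Z → ℝ) {p : ℕ} (hp : Even p) :
    ∫ z, |f z.1 * g z.2.1 * h z.2.2| ^ p ∂μ.prod (ν.prod ρ) =
      (∫ x, f x ^ p ∂μ) * ((∫ y, g y ^ p ∂ν) * ∫ z, h z ^ p ∂ρ) := by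
  simp only [hp.pow_abs, mul_pow, mul_assoc]
  exact (integral_prod_mul (fun x => f x ^ p) fun yz : Y × Z => g yz.1 ^ p * h yz.2 ^ p).trans
    (congrArg _ (integral_prod_mul (fun y => g y ^ p) fun z => h z ^ p))

theorem mixed_ustat_monomial_moment_bound_general {q s : ℕ}
    (w : Fin q → ℕ) (hw : ∀ c, 1 ≤ w c ∧ w c ≤ s)
    (m ℓ : ℕ) (hm : 1 ≤ m)
    (μ ν : Measure (Fin q → ℝ)) [IsProbabilityMeasure μ] [IsProbabilityMeasure ν]
    (hcentμ : IsCenteredMeasure w μ) (hcentν : IsCenteredMeasure w ν)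
    (hmomμ : HasFiniteHomMoments w μ (2 * m * ℓ))
    (hmomν : HasFiniteHomMoments w ν (2 * m * ℓ))
    (B₁ B₂ : List (Finset (Fin q) × (Fin q → ℕ)))
    (hB₁ : ValidBlocks B₁) (hB₂ : ValidBlocks B₂)
    (d₁ d₂ k : ℕ) (hd₁ : ustatHomDeg w B₁ = d₁) (hd₂ : ustatHomDeg w B₂ = d₂)
    (β : Fin q → ℕ) (hβ : homDeg w β = k)
    (hsum : d₁ + d₂ + k ≤ ℓ) :
    ∃ C : ℝ, 0 < C ∧ ∀ N j : ℕ, 1 ≤ j → j ≤ N →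
      ∀ κ : Measure (Fin q → ℝ), IsProbabilityMeasure κ → (κ = μ ∨ κ = ν) →
        (∫ z : (Fin (j - 1) → Fin q → ℝ) × ((Fin q → ℝ) × (Fin (N - j) → Fin q → ℝ)),
            |Ustat B₁ z.1 * (∏ c, z.2.1 c ^ β c) * Ustat B₂ z.2.2| ^ (2 * m)
          ∂((Measure.pi fun _ : Fin (j - 1) => μ).prod
              (κ.prod (Measure.pi fun _ : Fin (N - j) => ν)))) ≤
          C * (N : ℝ) ^ ((d₁ + d₂) * m) := by
  subst hd₁ hd₂ hβ
  have hw₁ : ∀ c, 1 ≤ w c := fun c => (hw c).1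
  obtain ⟨C₁, hC₁, hU₁⟩ := exists_integral_Ustat_pow_le hw₁ μ hcentμ hm
    (hmomμ.mono (by gcongr; omega)) hB₁
  obtain ⟨C₂, hC₂, hU₂⟩ := exists_integral_Ustat_pow_le hw₁ ν hcentν hm
    (hmomν.mono (by gcongr; omega)) hB₂
  obtain ⟨Mμ, hMμ, hμ⟩ := exists_abs_integral_monomialFn_le hw₁ μ (2 * m * ℓ)
  obtain ⟨Mν, -, hν⟩ := exists_abs_integral_monomialFn_le hw₁ ν (2 * m * ℓ)
  have hdegβ : 2 * m * homDeg w β ≤ 2 * m * ℓ := by gcongr; omega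
  refine ⟨C₁ * max Mμ Mν * C₂, by positivity, fun N j hj hjN κ _ hκ => ?_⟩
  have hmid : ∫ y, monomialFn β y ^ (2 * m) ∂κ ≤ max Mμ Mν := by
    rcases hκ with rfl | rfl
    · exact (integral_monomialFn_pow_le hμ hdegβ).trans (le_max_left _ _)
    · exact (integral_monomialFn_pow_le hν hdegβ).trans (le_max_right _ _)
  have hpow : ∀ x : ℝ, 0 ≤ x ^ (2 * m) := (even_two_mul m).pow_nonneg
  calc _ = _ := integral_abs_mul_mul_pow_prod _ _ _ (Ustat B₁) (monomialFn β) (Ustat B₂)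
        (even_two_mul m)
    _ ≤ (C₁ * (N : ℝ) ^ (m * ustatHomDeg w B₁)) * (max Mμ Mν *
          (C₂ * (N : ℝ) ^ (m * ustatHomDeg w B₂))) :=
        mul_le_mul ((hU₁ _).trans (by gcongr; omega))
          (mul_le_mul hmid ((hU₂ _).trans (by gcongr; omega)) (integral_nonneg fun _ => hpow _)
            (by positivity))
          (mul_nonneg (integral_nonneg fun _ => hpow _) (integral_nonneg fun _ => hpow _))
          (by positivity)
    _ = C₁ * max Mμ Mν * C₂ * (N : ℝ) ^ ((ustatHomDeg w B₁ + ustatHomDeg w B₂) * m) := by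
        ring

/-- Let `m, ℓ ≥ 1` and let `μ`, `ν` be centered Borel probability measures on `ℝ^q`,
each with `2mℓ` finite homogeneous moments.  Let `U₁, U₂` be generalized U-statistics
of homogeneous degrees `d₁, d₂`, let `m_β` be a monomial of homogeneous degree `k ≥ 1`,
with `d₁ + d₂ + k ≤ ℓ`.  Then there is `C = C(μ, ν, q, m, ℓ) > 0` such that for all
`N ≥ 1` and `1 ≤ j ≤ N`, for independent `x₀ ∼ μ^{⊗(j−1)}`, `x_j ∼ μ` or `ν`,
`x_t ∼ ν^{⊗(N−j)}`, one has
`E[|U₁(x₀) · m_β(x_j) · U₂(x_t)|^{2m}] ≤ C · N^{(d₁+d₂)m}`. -/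
theorem mixed_ustat_monomial_moment_bound {q s : ℕ} (hq : 1 ≤ q) (hs : 1 ≤ s)
    (w : Fin q → ℕ) (hw : ∀ c, 1 ≤ w c ∧ w c ≤ s)
    (m ℓ : ℕ) (hm : 1 ≤ m) (hℓ : 1 ≤ ℓ)
    (μ ν : Measure (Fin q → ℝ)) [IsProbabilityMeasure μ] [IsProbabilityMeasure ν]
    (hcentμ : IsCenteredMeasure w μ) (hcentν : IsCenteredMeasure w ν)
    (hmomμ : HasFiniteHomMoments w μ (2 * m * ℓ))
    (hmomν : HasFiniteHomMoments w ν (2 * m * ℓ))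
    (B₁ B₂ : List (Finset (Fin q) × (Fin q → ℕ)))
    (hB₁ : ValidBlocks B₁) (hB₂ : ValidBlocks B₂)
    (d₁ d₂ k : ℕ) (hd₁ : ustatHomDeg w B₁ = d₁) (hd₂ : ustatHomDeg w B₂ = d₂)
    (β : Fin q → ℕ) (hβ : homDeg w β = k) (hk : 1 ≤ k)
    (hsum : d₁ + d₂ + k ≤ ℓ) :
    ∃ C : ℝ, 0 < C ∧ ∀ N j : ℕ, 1 ≤ j → j ≤ N →
      ∀ κ : Measure (Fin q → ℝ), IsProbabilityMeasure κ → (κ = μ ∨ κ = ν) →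
        (∫ z : (Fin (j - 1) → Fin q → ℝ) × ((Fin q → ℝ) × (Fin (N - j) → Fin q → ℝ)),
            |Ustat B₁ z.1 * (∏ c, z.2.1 c ^ β c) * Ustat B₂ z.2.2| ^ (2 * m)
          ∂((Measure.pi fun _ : Fin (j - 1) => μ).prod
              (κ.prod (Measure.pi fun _ : Fin (N - j) => ν)))) ≤
          C * (N : ℝ) ^ ((d₁ + d₂) * m) :=
  mixed_ustat_monomial_moment_bound_general w hw m ℓ hm μ ν hcentμ hcentν hmomμ hmomν B₁ B₂ hB₁ hB₂
    d₁ d₂ k hd₁ hd₂ β hβ hsum
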